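/- Empirical pre-sparsity bound for lasso (Lemma 3.1): Let c > 1 and c̄ = (c+1)/(c−1). Suppose κ(c̄) > 0, λ > 0, and λ ≥ c·n·‖S‖_∞. Then any lasso estimator β̂, with m̂ = |supp(β̂) \ T|, satisfies √m̂ ≤ √s·√φ(m̂)·2c̄/κ(c̄) + 3(c̄+1)·√φ(m̂)·n·c_s/λ. -/

import Mathlib

open Finset MeasureTheory ProbabilityTheory

noncomputable section

/-- Prediction norm `‖δ‖_{2,n} = ((1/n) ∑_i (x_i'δ)²)^{1/2}`. -/
def predNorm (n p : ℕ) (x : Fin n → Fin p → ℝ) (δ : Fin p → ℝ) : ℝ :=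
  Real.sqrt ((n : ℝ)⁻¹ * ∑ i, (∑ j, x i j * δ j) ^ 2)

/-- Least-squares criterion `Q̂(β) = (1/n) ∑_i (y_i - x_i'β)²`. -/
def Qls (n p : ℕ) (x : Fin n → Fin p → ℝ) (y : Fin n → ℝ) (β : Fin p → ℝ) : ℝ :=
  (n : ℝ)⁻¹ * ∑ i, (y i - ∑ j, x i j * β j) ^ 2

/-- ℓ1-norm on `ℝ^p`. -/
def l1 {p : ℕ} (v : Fin p → ℝ) : ℝ := ∑ j, |v j|

/-- sup-norm (max-absolute-coordinate norm) on `ℝ^p`. -/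
def supNorm {p : ℕ} (v : Fin p → ℝ) : ℝ := ⨆ j, |v j|

/-- `restr A δ` is `δ` with coordinates outside `A` set to `0`. -/
def restr {p : ℕ} (A : Finset (Fin p)) (δ : Fin p → ℝ) : Fin p → ℝ :=
  fun j => if j ∈ A then δ j else 0

/-- Support of a vector, as a finset. -/
def suppF {p : ℕ} (v : Fin p → ℝ) : Finset (Fin p) :=
  Finset.univ.filter (fun j => v j ≠ 0)

/-- Restricted eigenvalue `κ(c̄)`. -/
def kappaRE (n p : ℕ) (x : Fin n → Fin p → ℝ) (T : Finset (Fin p)) (cbar : ℝ) : ℝ :=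
  sInf {r : ℝ | ∃ δ : Fin p → ℝ, δ ≠ 0 ∧ l1 (restr Tᶜ δ) ≤ cbar * l1 (restr T δ) ∧
    r = Real.sqrt T.card * predNorm n p x δ / l1 (restr T δ)}

/-- Restricted sparse maximal eigenvalue `φ(m)`. -/
def phiRSE (n p : ℕ) (x : Fin n → Fin p → ℝ) (T : Finset (Fin p)) (m : ℕ) : ℝ :=
  sSup {r : ℝ | ∃ δ : Fin p → ℝ, δ ≠ 0 ∧ (suppF (restr Tᶜ δ)).card ≤ m ∧
    r = (predNorm n p x δ) ^ 2 / ∑ j, δ j ^ 2}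

/-- Restricted sparse minimal eigenvalue `κ̃(m)²`. -/
def kappaTildeSq (n p : ℕ) (x : Fin n → Fin p → ℝ) (T : Finset (Fin p)) (m : ℕ) : ℝ :=
  sInf {r : ℝ | ∃ δ : Fin p → ℝ, δ ≠ 0 ∧ (suppF (restr Tᶜ δ)).card ≤ m ∧
    r = (predNorm n p x δ) ^ 2 / ∑ j, δ j ^ 2}

/-- The condition number `μ(m) = √φ(m)/κ̃(m)`. -/
def muCond (n p : ℕ) (x : Fin n → Fin p → ℝ) (T : Finset (Fin p)) (m : ℕ) : ℝ :=
  Real.sqrt (phiRSE n p x T m) / Real.sqrt (kappaTildeSq n p x T m)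

/-!
Write `δ = β̂ - β₀` and let `L = λ / n`. Comparing the lasso objective at `β̂` and `β₀`, and
bounding the score term by `‖S‖_∞ ‖δ‖₁ ≤ (L / c) ‖δ‖₁`, gives
`c ‖δ‖²_{2,n} ≤ 2 c c_s ‖δ‖_{2,n} + L ((c + 1) ‖δ_T‖₁ - (c - 1) ‖δ_{Tᶜ}‖₁)`.
Either `δ` lies in the cone `‖δ_{Tᶜ}‖₁ ≤ c̄ ‖δ_T‖₁`, where `κ(c̄) ‖δ_T‖₁ ≤ √s ‖δ‖_{2,n}`, or the
bracket is negative; in both cases `‖δ‖_{2,n} ≤ 2 c_s + (c + 1) L √s / (c κ(c̄))`.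

On the other hand, minimality of `β̂` in each coordinate where `β̂_j ≠ 0` forces `|G_j| = L` for the
gradient `G = (2/n) X'(y - X β̂)`. Testing `G` against its restriction `w` to `supp β̂ \ T` gives
`m̂ L² = G'w ≤ m̂ L² / c + 2 (c_s + ‖δ‖_{2,n}) ‖w‖_{2,n}`, and `‖w‖_{2,n} ≤ √φ(m̂) √m̂ L` since `w`
has `m̂` entries of size `L` off `T`. Substituting the first bound into the second gives the claim.
-/

def empInner (n : ℕ) (a b : Fin n → ℝ) : ℝ := (n : ℝ)⁻¹ * ∑ i, a i * b i

def empNorm (n : ℕ) (a : Fin n → ℝ) : ℝ := √((n : ℝ)⁻¹ * ∑ i, a i ^ 2)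

def fit {n p : ℕ} (x : Fin n → Fin p → ℝ) (δ : Fin p → ℝ) : Fin n → ℝ :=
  fun i => ∑ j, x i j * δ j

def score {n p : ℕ} (x : Fin n → Fin p → ℝ) (e : Fin n → ℝ) : Fin p → ℝ :=
  fun j => (2 / n : ℝ) * ∑ i, e i * x i j

def lassoObjective {n p : ℕ} (x : Fin n → Fin p → ℝ) (y : Fin n → ℝ) (L : ℝ)
    (β : Fin p → ℝ) : ℝ :=
  Qls n p x y β + L * l1 β

section Empirical

variable {n : ℕ}

lemma empNorm_nonneg (a : Fin n → ℝ) : 0 ≤ empNorm n a := Real.sqrt_nonneg _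

lemma empNorm_sq (a : Fin n → ℝ) : empNorm n a ^ 2 = (n : ℝ)⁻¹ * ∑ i, a i ^ 2 :=
  Real.sq_sqrt (by positivity)

lemma abs_empInner_le (a b : Fin n → ℝ) : |empInner n a b| ≤ empNorm n a * empNorm n b := by
  rw [← Real.sqrt_sq_eq_abs, empNorm, empNorm, ← Real.sqrt_mul (by positivity)]
  refine Real.sqrt_le_sqrt ?_
  calc empInner n a b ^ 2 = (n : ℝ)⁻¹ ^ 2 * (∑ i, a i * b i) ^ 2 := by rw [empInner, mul_pow]
    _ ≤ (n : ℝ)⁻¹ ^ 2 * ((∑ i, a i ^ 2) * ∑ i, b i ^ 2) := by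
      gcongr; exact Finset.sum_mul_sq_le_sq_mul_sq _ _ _
    _ = _ := by ring

lemma empInner_add_left (a b c : Fin n → ℝ) :
    empInner n (a + b) c = empInner n a c + empInner n b c := by
  simp only [empInner, Pi.add_apply, add_mul, Finset.sum_add_distrib, mul_add]

lemma empInner_sub_left (a b c : Fin n → ℝ) :
    empInner n (a - b) c = empInner n a c - empInner n b c := by
  simp only [empInner, Pi.sub_apply, sub_mul, Finset.sum_sub_distrib, mul_sub]

end Empirical

section Design

variable {n p : ℕ} (x : Fin n → Fin p → ℝ)

lemma fit_add (β δ : Fin p → ℝ) : fit x (β + δ) = fit x β + fit x δ := by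
  ext i; simp only [fit, Pi.add_apply, mul_add, Finset.sum_add_distrib]

lemma fit_sub (β δ : Fin p → ℝ) : fit x (β - δ) = fit x β - fit x δ := by
  ext i; simp only [fit, Pi.sub_apply, mul_sub, Finset.sum_sub_distrib]

lemma fit_single (j : Fin p) (t : ℝ) : fit x (Pi.single j t) = fun i => x i j * t := by
  ext i; simp [fit, Pi.single_apply]

lemma predNorm_eq_empNorm (δ : Fin p → ℝ) : predNorm n p x δ = empNorm n (fit x δ) := rfl

lemma predNorm_nonneg (δ : Fin p → ℝ) : 0 ≤ predNorm n p x δ := Real.sqrt_nonneg _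

lemma Qls_eq_empNorm_sq (y : Fin n → ℝ) (β : Fin p → ℝ) :
    Qls n p x y β = empNorm n (y - fit x β) ^ 2 := by
  rw [empNorm_sq]; rfl

lemma Qls_add (y : Fin n → ℝ) (β δ : Fin p → ℝ) :
    Qls n p x y (β + δ) =
      Qls n p x y β - 2 * empInner n (y - fit x β) (fit x δ) + predNorm n p x δ ^ 2 := by
  simp only [Qls_eq_empNorm_sq, predNorm_eq_empNorm, empNorm_sq, empInner, fit_add,
    Pi.sub_apply, Pi.add_apply, Finset.mul_sum, ← Finset.sum_sub_distrib,
    ← Finset.sum_add_distrib]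
  exact Finset.sum_congr rfl fun i _ => by ring

lemma score_dotProduct (e : Fin n → ℝ) (v : Fin p → ℝ) :
    score x e ⬝ᵥ v = 2 * empInner n e (fit x v) := by
  simp only [score, fit, empInner, dotProduct, Finset.mul_sum, Finset.sum_mul]
  rw [Finset.sum_comm]
  exact Finset.sum_congr rfl fun _ _ => Finset.sum_congr rfl fun _ _ => by ring

lemma predNorm_single_sq (j : Fin p) (t : ℝ) :
    predNorm n p x (Pi.single j t) ^ 2 = ((n : ℝ)⁻¹ * ∑ i, x i j ^ 2) * t ^ 2 := by
  simp only [predNorm_eq_empNorm, empNorm_sq, fit_single, mul_pow, Finset.sum_mul, mul_assoc]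

end Design

section Norms

variable {p : ℕ}

lemma l1_nonneg (v : Fin p → ℝ) : 0 ≤ l1 v := Finset.sum_nonneg fun _ _ => abs_nonneg _

lemma abs_le_supNorm (v : Fin p → ℝ) (j : Fin p) : |v j| ≤ supNorm v :=
  le_ciSup (f := fun k => |v k|) (Set.finite_range _).bddAbove j

lemma abs_dotProduct_le_supNorm_mul_l1 (u v : Fin p → ℝ) : |u ⬝ᵥ v| ≤ supNorm u * l1 v := by
  rw [l1, Finset.mul_sum]
  refine (Finset.abs_sum_le_sum_abs _ _).trans (Finset.sum_le_sum fun j _ => ?_)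
  rw [abs_mul]
  exact mul_le_mul_of_nonneg_right (abs_le_supNorm u j) (abs_nonneg _)

lemma l1_eq_l1_restr_add_l1_restr_compl (T : Finset (Fin p)) (v : Fin p → ℝ) :
    l1 v = l1 (restr T v) + l1 (restr Tᶜ v) := by
  simp only [l1, restr, ← Finset.sum_add_distrib, Finset.mem_compl]
  exact Finset.sum_congr rfl fun j _ => by split_ifs <;> simp

lemma l1_sub_l1_le_of_suppF_subset {T : Finset (Fin p)} {β₀ : Fin p → ℝ}
    (hT : suppF β₀ ⊆ T) (β : Fin p → ℝ) :
    l1 β₀ - l1 β ≤ l1 (restr T (β - β₀)) - l1 (restr Tᶜ (β - β₀)) := by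
  simp only [l1, restr, ← Finset.sum_sub_distrib, Finset.mem_compl]
  refine Finset.sum_le_sum fun j _ => ?_
  by_cases hj : j ∈ T
  · simpa [hj, abs_sub_comm] using abs_sub_abs_le_abs_sub (β₀ j) (β j)
  · have : β₀ j = 0 := by simpa [suppF] using mt (@hT j) hj
    simp [hj, this]

lemma l1_add_single (β : Fin p → ℝ) (j : Fin p) (t : ℝ) :
    l1 (β + Pi.single j t) = l1 β + (|β j + t| - |β j|) := by
  simp only [l1, Pi.add_apply, Pi.single_apply]
  rw [← Finset.add_sum_erase _ _ (Finset.mem_univ j),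
    ← Finset.add_sum_erase _ _ (Finset.mem_univ j),
    Finset.sum_congr rfl fun k hk => by rw [if_neg (Finset.ne_of_mem_erase hk), add_zero],
    if_pos rfl]
  ring

lemma suppF_restr_restr_subset {A : Finset (Fin p)} {v : Fin p → ℝ} (B : Finset (Fin p)) :
    suppF (restr B (restr A v)) ⊆ A := by
  intro j hj
  by_contra hjA
  simp [suppF, restr, hjA] at hj

lemma dotProduct_restr_self (A : Finset (Fin p)) (v : Fin p → ℝ) :
    v ⬝ᵥ restr A v = ∑ j, restr A v j ^ 2 :=
  Finset.sum_congr rfl fun j _ => by by_cases hj : j ∈ A <;> simp [restr, hj, sq]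

lemma l1_restr_of_abs_eq {A : Finset (Fin p)} {v : Fin p → ℝ} {L : ℝ}
    (h : ∀ j ∈ A, |v j| = L) : l1 (restr A v) = A.card * L := by
  simp only [l1, restr, apply_ite abs, abs_zero]
  rw [Finset.sum_ite_mem, Finset.univ_inter, Finset.sum_congr rfl h, Finset.sum_const,
    nsmul_eq_mul]

lemma sum_sq_restr_of_abs_eq {A : Finset (Fin p)} {v : Fin p → ℝ} {L : ℝ}
    (h : ∀ j ∈ A, |v j| = L) : ∑ j, restr A v j ^ 2 = A.card * L ^ 2 := by
  have hsq : ∀ j ∈ A, v j ^ 2 = L ^ 2 := fun j hj => by rw [← sq_abs, h j hj]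
  simp only [restr, ite_pow, zero_pow two_ne_zero]
  rw [Finset.sum_ite_mem, Finset.univ_inter, Finset.sum_congr rfl hsq, Finset.sum_const,
    nsmul_eq_mul]

end Norms

section Eigen

variable {n p : ℕ} (x : Fin n → Fin p → ℝ) (T : Finset (Fin p))

lemma kappaRE_mul_l1_restr_le {cbar : ℝ} {δ : Fin p → ℝ}
    (hcone : l1 (restr Tᶜ δ) ≤ cbar * l1 (restr T δ)) :
    kappaRE n p x T cbar * l1 (restr T δ) ≤ √T.card * predNorm n p x δ := by
  have hRHS : 0 ≤ √T.card * predNorm n p x δ := by have := predNorm_nonneg x δ; positivity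
  rcases (l1_nonneg (restr T δ)).eq_or_lt with hzero | hpos
  · rwa [← hzero, mul_zero]
  have hδ : δ ≠ 0 := by rintro rfl; simp [restr, l1] at hpos
  have hbdd : BddBelow {r : ℝ | ∃ δ : Fin p → ℝ, δ ≠ 0 ∧
      l1 (restr Tᶜ δ) ≤ cbar * l1 (restr T δ) ∧
      r = √T.card * predNorm n p x δ / l1 (restr T δ)} := by
    refine ⟨0, ?_⟩
    rintro r ⟨δ', -, -, rfl⟩
    exact div_nonneg (mul_nonneg (Real.sqrt_nonneg _) (predNorm_nonneg x _)) (l1_nonneg _)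
  rw [← le_div_iff₀ hpos]
  exact csInf_le hbdd ⟨δ, hδ, hcone, rfl⟩

lemma l1_restr_combination_le {c : ℝ} (hc : 1 < c)
    (hκ : 0 < kappaRE n p x T ((c + 1) / (c - 1))) (δ : Fin p → ℝ) :
    (c + 1) * l1 (restr T δ) - (c - 1) * l1 (restr Tᶜ δ) ≤
      (c + 1) * √T.card * predNorm n p x δ / kappaRE n p x T ((c + 1) / (c - 1)) := by
  have hc1 : 0 < c - 1 := by linarith
  have hTc := l1_nonneg (restr Tᶜ δ)
  have hRHS : 0 ≤ √T.card * predNorm n p x δ / kappaRE n p x T ((c + 1) / (c - 1)) :=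
    div_nonneg (mul_nonneg (Real.sqrt_nonneg _) (predNorm_nonneg x δ)) hκ.le
  rw [mul_assoc, mul_div_assoc]
  by_cases hcone : l1 (restr Tᶜ δ) ≤ (c + 1) / (c - 1) * l1 (restr T δ)
  · have hT := (le_div_iff₀' hκ).2 (kappaRE_mul_l1_restr_le x T hcone)
    nlinarith
  · rw [not_le, div_mul_eq_mul_div, div_lt_iff₀ hc1] at hcone
    nlinarith

lemma predNorm_sq_le (δ : Fin p → ℝ) :
    predNorm n p x δ ^ 2 ≤ ((n : ℝ)⁻¹ * ∑ i, ∑ j, x i j ^ 2) * ∑ j, δ j ^ 2 := by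
  rw [predNorm_eq_empNorm, empNorm_sq, mul_assoc, Finset.sum_mul]
  gcongr with i
  exact Finset.sum_mul_sq_le_sq_mul_sq _ _ _

lemma predNorm_le_sqrt_phiRSE_mul {m : ℕ} {w : Fin p → ℝ}
    (hw : (suppF (restr Tᶜ w)).card ≤ m) :
    predNorm n p x w ≤ √(phiRSE n p x T m) * √(∑ j, w j ^ 2) := by
  rcases eq_or_ne w 0 with rfl | hw0
  · simp [predNorm_eq_empNorm, empNorm, fit]
  have hpos : 0 < ∑ j, w j ^ 2 := by
    obtain ⟨j, hj⟩ := Function.ne_iff.mp hw0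
    exact Finset.sum_pos' (fun _ _ => sq_nonneg _) ⟨j, Finset.mem_univ _, pow_two_pos_of_ne_zero hj⟩
  have hbdd : BddAbove {r : ℝ | ∃ δ : Fin p → ℝ, δ ≠ 0 ∧ (suppF (restr Tᶜ δ)).card ≤ m ∧
      r = predNorm n p x δ ^ 2 / ∑ j, δ j ^ 2} := by
    refine ⟨(n : ℝ)⁻¹ * ∑ i, ∑ j, x i j ^ 2, ?_⟩
    rintro r ⟨δ, -, -, rfl⟩
    exact div_le_of_le_mul₀ (by positivity) (by positivity) (predNorm_sq_le x δ)
  have hratio := le_csSup hbdd ⟨w, hw0, hw, rfl⟩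
  calc predNorm n p x w = √(predNorm n p x w ^ 2) := (Real.sqrt_sq (predNorm_nonneg x w)).symm
    _ ≤ √(phiRSE n p x T m * ∑ j, w j ^ 2) := Real.sqrt_le_sqrt ((div_le_iff₀ hpos).1 hratio)
    _ = _ := Real.sqrt_mul' _ hpos.le

end Eigen

lemma abs_eq_of_forall_mul_le {a b g L : ℝ} (hL : 0 ≤ L) (hb : b ≠ 0)
    (h : ∀ t, g * t ≤ a * t ^ 2 + L * (|b + t| - |b|)) : |g| = L := by
  have hmin : IsLocalMin (fun t => a * t ^ 2 + L * (|b + t| - |b|) - g * t) 0 :=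
    Filter.Eventually.of_forall fun t => by simpa using sub_nonneg.2 (h t)
  have habs : HasDerivAt (fun t => |b + t|) (SignType.sign b) 0 :=
    (hasDerivAt_abs (by simpa using hb)).comp_const_add b 0 |>.congr_deriv (by simp)
  have hderiv := (((hasDerivAt_pow 2 (0 : ℝ)).const_mul a).add
      ((habs.sub_const |b|).const_mul L)).sub ((hasDerivAt_id 0).const_mul g)
  have hg : L * SignType.sign b = g := by simpa [sub_eq_zero] using hmin.hasDerivAt_eq_zero hderiv
  rcases hb.lt_or_gt with hb | hb <;> simp [← hg, hb, abs_of_nonneg hL]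

lemma le_of_sq_le_mul {D B : ℝ} (hB : 0 ≤ B) (h : D ^ 2 ≤ D * B) : D ≤ B := by
  nlinarith

section Lasso

variable {n p : ℕ} {x : Fin n → Fin p → ℝ} {y : Fin n → ℝ} {L : ℝ} {βhat : Fin p → ℝ}

lemma abs_score_eq_of_lasso_min (hL : 0 ≤ L)
    (hmin : ∀ β, lassoObjective x y L βhat ≤ lassoObjective x y L β) {j : Fin p}
    (hj : βhat j ≠ 0) : |score x (y - fit x βhat) j| = L := by
  refine abs_eq_of_forall_mul_le (a := (n : ℝ)⁻¹ * ∑ i, x i j ^ 2) hL hj fun t => ?_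
  have h := hmin (βhat + Pi.single j t)
  have hinner : 2 * empInner n (y - fit x βhat) (fit x (Pi.single j t)) =
      score x (y - fit x βhat) j * t := by
    rw [← score_dotProduct, dotProduct_single]
  rw [lassoObjective, lassoObjective, Qls_add, l1_add_single, predNorm_single_sq, hinner] at h
  linarith

lemma mul_score_dotProduct_le {c : ℝ} (hc : 0 ≤ c) {e : Fin n → ℝ}
    (hS : c * supNorm (score x e) ≤ L) (v : Fin p → ℝ) :
    c * (score x e ⬝ᵥ v) ≤ L * l1 v :=
  calc c * (score x e ⬝ᵥ v) ≤ c * (supNorm (score x e) * l1 v) :=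
        mul_le_mul_of_nonneg_left ((le_abs_self _).trans (abs_dotProduct_le_supNorm_mul_l1 _ _)) hc
    _ ≤ L * l1 v := by rw [← mul_assoc]; exact mul_le_mul_of_nonneg_right hS (l1_nonneg v)

lemma predNorm_sub_le_of_lasso_min {f : Fin n → ℝ} {T : Finset (Fin p)} {β₀ : Fin p → ℝ}
    {c : ℝ} (hc : 1 < c) (hκ : 0 < kappaRE n p x T ((c + 1) / (c - 1)))
    (hT : suppF β₀ ⊆ T) (hL : 0 ≤ L) (hS : c * supNorm (score x (y - f)) ≤ L)
    (hmin : ∀ β, lassoObjective x y L βhat ≤ lassoObjective x y L β) :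
    predNorm n p x (βhat - β₀) ≤
      2 * empNorm n (f - fit x β₀) +
        (c + 1) * L * √T.card / (c * kappaRE n p x T ((c + 1) / (c - 1))) := by
  have hc0 : 0 < c := by linarith
  have hQ := Qls_add x y β₀ (βhat - β₀)
  rw [add_sub_cancel] at hQ
  have hbasic := hmin β₀
  rw [lassoObjective, lassoObjective, hQ] at hbasic
  have hsplit : 2 * empInner n (y - fit x β₀) (fit x (βhat - β₀)) =
      score x (y - f) ⬝ᵥ (βhat - β₀) + 2 * empInner n (f - fit x β₀) (fit x (βhat - β₀)) := by
    rw [score_dotProduct, ← mul_add, ← empInner_add_left, sub_add_sub_cancel]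
  have hscore := mul_score_dotProduct_le hc0.le hS (βhat - β₀)
  have happrox := (le_abs_self _).trans (abs_empInner_le (f - fit x β₀) (fit x (βhat - β₀)))
  rw [← predNorm_eq_empNorm] at happrox
  have hl1 := l1_sub_l1_le_of_suppF_subset hT βhat
  have hl1δ := l1_eq_l1_restr_add_l1_restr_compl T (βhat - β₀)
  have hcomb := mul_le_mul_of_nonneg_left (l1_restr_combination_le x T hc hκ (βhat - β₀)) hL
  have hquad : c * predNorm n p x (βhat - β₀) ^ 2 ≤
      c * (2 * empNorm n (f - fit x β₀) * predNorm n p x (βhat - β₀)) +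
        L * ((c + 1) * √T.card * predNorm n p x (βhat - β₀) /
          kappaRE n p x T ((c + 1) / (c - 1))) := by
    nlinarith [mul_le_mul_of_nonneg_left happrox hc0.le, mul_le_mul_of_nonneg_left hl1 hL]
  refine le_of_sq_le_mul (by have := empNorm_nonneg (f - fit x β₀); positivity) ?_
  rw [← mul_le_mul_iff_of_pos_left hc0]
  refine hquad.trans_eq ?_
  field_simp

lemma mul_sqrt_card_le_of_lasso_min {f : Fin n → ℝ} {T : Finset (Fin p)} {c : ℝ}
    (hc : 0 < c) (hL : 0 < L) (hS : c * supNorm (score x (y - f)) ≤ L)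
    (hmin : ∀ β, lassoObjective x y L βhat ≤ lassoObjective x y L β) (β₀ : Fin p → ℝ) :
    (c - 1) * L * √(suppF βhat \ T).card ≤
      2 * c * √(phiRSE n p x T (suppF βhat \ T).card) *
        (empNorm n (f - fit x β₀) + predNorm n p x (βhat - β₀)) := by
  set A := suppF βhat \ T
  set G := score x (y - fit x βhat)
  have hG : ∀ j ∈ A, |G j| = L := fun j hj =>
    abs_score_eq_of_lasso_min hL.le hmin (by simpa [suppF] using (Finset.mem_sdiff.1 hj).1)
  have hGw : G ⬝ᵥ restr A G = A.card * L ^ 2 := by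
    rw [dotProduct_restr_self, sum_sq_restr_of_abs_eq hG]
  have hsplit : G ⬝ᵥ restr A G = score x (y - f) ⬝ᵥ restr A G +
      2 * empInner n (f - fit x β₀) (fit x (restr A G)) -
        2 * empInner n (fit x (βhat - β₀)) (fit x (restr A G)) := by
    rw [score_dotProduct, score_dotProduct, ← mul_add, ← mul_sub, ← empInner_add_left,
      ← empInner_sub_left, fit_sub]
    congr 2
    abel
  have hscore := mul_score_dotProduct_le hc.le hS (restr A G)
  rw [l1_restr_of_abs_eq hG] at hscore
  have happrox := (le_abs_self _).trans (abs_empInner_le (f - fit x β₀) (fit x (restr A G)))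
  have herror := (neg_le_abs _).trans
    (abs_empInner_le (fit x (βhat - β₀)) (fit x (restr A G)))
  rw [← predNorm_eq_empNorm] at happrox
  rw [← predNorm_eq_empNorm, ← predNorm_eq_empNorm] at herror
  have hphi := predNorm_le_sqrt_phiRSE_mul x T
    (Finset.card_le_card (suppF_restr_restr_subset (v := G) (A := A) Tᶜ))
  rw [sum_sq_restr_of_abs_eq hG, Real.sqrt_mul' _ (sq_nonneg L), Real.sqrt_sq hL.le] at hphi
  have hK : 0 ≤ empNorm n (f - fit x β₀) + predNorm n p x (βhat - β₀) :=
    add_nonneg (empNorm_nonneg _) (predNorm_nonneg x _)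
  have hquad : (c - 1) * (A.card * L ^ 2) ≤
      2 * c * (empNorm n (f - fit x β₀) + predNorm n p x (βhat - β₀)) *
        (√(phiRSE n p x T A.card) * (√A.card * L)) := by
    nlinarith [mul_le_mul_of_nonneg_left hphi (mul_nonneg (by linarith : 0 ≤ 2 * c) hK)]
  rcases (Real.sqrt_nonneg (A.card : ℝ)).eq_or_lt with hm | hm
  · rw [← hm, mul_zero]
    have := Real.sqrt_nonneg (phiRSE n p x T A.card)
    positivity
  · refine le_of_mul_le_mul_right ?_ (mul_pos hm hL)
    linear_combination hquad + (c - 1) * L ^ 2 * Real.sq_sqrt (Nat.cast_nonneg (α := ℝ) A.card)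

end Lasso

theorem lasso_empirical_pre_sparsity_general
    (n p : ℕ) (hn : 0 < n)
    (x : Fin n → Fin p → ℝ) (y f : Fin n → ℝ)
    (β0 : Fin p → ℝ) (T : Finset (Fin p)) (hT : T = suppF β0)
    (s : ℕ) (hs : s = T.card)
    (cs : ℝ) (hcs : cs = Real.sqrt ((n : ℝ)⁻¹ * ∑ i, (f i - ∑ j, x i j * β0 j) ^ 2))
    (c : ℝ) (hc : 1 < c) (cbar : ℝ) (hcbar : cbar = (c + 1) / (c - 1))
    (hκ : 0 < kappaRE n p x T cbar)
    (S : Fin p → ℝ) (hS : S = fun j => (2 / n : ℝ) * ∑ i, (y i - f i) * x i j)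
    (lam : ℝ) (hlam : 0 < lam) (hlamS : c * n * supNorm S ≤ lam)
    (βhat : Fin p → ℝ)
    (hβhat : ∀ β : Fin p → ℝ,
      Qls n p x y βhat + lam / n * l1 βhat ≤ Qls n p x y β + lam / n * l1 β)
    (mhat : ℕ) (hmhat : mhat = (suppF βhat \ T).card) :
    Real.sqrt mhat ≤
      Real.sqrt s * Real.sqrt (phiRSE n p x T mhat) * (2 * cbar) / kappaRE n p x T cbar +
        3 * (cbar + 1) * Real.sqrt (phiRSE n p x T mhat) * n * cs / lam := by
  subst hs hcbar hmhat hS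
  replace hcs : cs = empNorm n (f - fit x β0) := hcs
  have hn' : (0 : ℝ) < n := Nat.cast_pos.2 hn
  have hL : 0 < lam / n := div_pos hlam hn'
  have hscore : c * supNorm (score x (y - f)) ≤ lam / n := by
    rw [le_div_iff₀ hn', mul_right_comm]; exact hlamS
  have hrate := predNorm_sub_le_of_lasso_min hc hκ hT.symm.subset hL.le hscore hβhat
  have hsparse := mul_sqrt_card_le_of_lasso_min (T := T) (by linarith) hL hscore hβhat β0
  rw [← hcs] at hrate hsparse
  generalize kappaRE n p x T ((c + 1) / (c - 1)) = κ at hκ hrate ⊢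
  have hc1 : 0 < c - 1 := sub_pos.2 hc
  refine le_of_mul_le_mul_left ?_ (mul_pos hc1 hL)
  calc (c - 1) * (lam / n) * √(suppF βhat \ T).card
      ≤ 2 * c * √(phiRSE n p x T (suppF βhat \ T).card) *
          (cs + predNorm n p x (βhat - β0)) := hsparse
    _ ≤ 2 * c * √(phiRSE n p x T (suppF βhat \ T).card) *
          (cs + (2 * cs + (c + 1) * (lam / n) * √T.card / (c * κ))) := by gcongr
    _ = _ := by field_simp; ring

/-- Lemma 3.1: empirical pre-sparsity bound for lasso. -/
theorem lasso_empirical_pre_sparsity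
    (n p : ℕ) (hn : 0 < n) (hp : 0 < p)
    (x : Fin n → Fin p → ℝ) (y f : Fin n → ℝ)
    (hx : ∀ j, (n : ℝ)⁻¹ * ∑ i, x i j ^ 2 = 1)
    (β0 : Fin p → ℝ) (T : Finset (Fin p)) (hT : T = suppF β0)
    (s : ℕ) (hs : s = T.card) (hs1 : 1 ≤ s)
    (cs : ℝ) (hcs : cs = Real.sqrt ((n : ℝ)⁻¹ * ∑ i, (f i - ∑ j, x i j * β0 j) ^ 2))
    (c : ℝ) (hc : 1 < c) (cbar : ℝ) (hcbar : cbar = (c + 1) / (c - 1))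
    (hκ : 0 < kappaRE n p x T cbar)
    (S : Fin p → ℝ) (hS : S = fun j => (2 / n : ℝ) * ∑ i, (y i - f i) * x i j)
    (lam : ℝ) (hlam : 0 < lam) (hlamS : c * n * supNorm S ≤ lam)
    (βhat : Fin p → ℝ)
    (hβhat : ∀ β : Fin p → ℝ,
      Qls n p x y βhat + lam / n * l1 βhat ≤ Qls n p x y β + lam / n * l1 β)
    (mhat : ℕ) (hmhat : mhat = (suppF βhat \ T).card) :
    Real.sqrt mhat ≤
      Real.sqrt s * Real.sqrt (phiRSE n p x T mhat) * (2 * cbar) / kappaRE n p x T cbar +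
        3 * (cbar + 1) * Real.sqrt (phiRSE n p x T mhat) * n * cs / lam :=
  lasso_empirical_pre_sparsity_general n p hn x y f β0 T hT s hs cs hcs c hc cbar hcbar hκ S hS lam
    hlam hlamS βhat hβhat mhat hmhat
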